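/- On the complex nilpotent Lie algebra with coframe η^1,…,η^4 satisfying dη^1 = dη^2 = 0, dη^3 = −(1/2) η^{1 1̄}, dη^4 = −(1/2) η^{2 2̄}, a generic invariant Hermitian fundamental form ω = (i/2) Σ_j α_{j j̄} η^{j j̄} + (1/2) Σ_{j<k} (α_{j k̄} η^{j k̄} − ᾱ_{j k̄} η^{k j̄}) satisfies ∂∂̄ω = 0 if and only if Im(α_{3 4̄}) = 0. -/
import Mathlib

/-!
STATEMENT 14: On the complex nilpotent Lie algebra with dη^1 = dη^2 = 0,
dη^3 = −(1/2)η^{11̄}, dη^4 = −(1/2)η^{22̄}, the generic invariant Hermitian form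
ω = (i/2)Σ_j α_{jj̄} η^{jj̄} + (1/2)Σ_{j<k}(α_{jk̄} η^{jk̄} − ᾱ_{jk̄} η^{kj̄})
satisfies ∂∂̄ω = 0 if and only if Im(α_{34̄}) = 0.
-/

open ExteriorAlgebra

set_option maxHeartbeats 2000000

noncomputable section

abbrev Λ8 : Type := ExteriorAlgebra ℂ (Fin 8 → ℂ)

def gen (j : Fin 8) : Λ8 := ExteriorAlgebra.ι ℂ (Pi.single j 1)

def eta (j : Fin 4) : Λ8 := gen (Fin.castAdd 4 j)

def etb (j : Fin 4) : Λ8 := gen (Fin.natAdd 4 j)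

/- ### Auxiliary lemmas -/

lemma gen_swap (i j : Fin 8) (x : Λ8) : gen i * (gen j * x) = -(gen j * (gen i * x)) := by
  have h' : gen i * gen j + gen j * gen i = 0 := ExteriorAlgebra.ι_add_mul_swap _ _
  have h : gen i * gen j = -(gen j * gen i) := eq_neg_of_add_eq_zero_left h'
  rw [← mul_assoc, h, neg_mul, mul_assoc]

lemma gen_swap2 (i j : Fin 8) : gen i * gen j = -(gen j * gen i) :=
  eq_neg_of_add_eq_zero_left (ExteriorAlgebra.ι_add_mul_swap _ _)

lemma gen_sq (i : Fin 8) (x : Λ8) : gen i * (gen i * x) = 0 := by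
  rw [← mul_assoc, show gen i * gen i = 0 from ExteriorAlgebra.ι_sq_zero _, zero_mul]

def idx : Fin 4 → Fin 8 := ![0, 4, 5, 1]
def L8 : (Fin 8 → ℂ) →ₗ[ℂ] (Fin 4 → ℂ) := LinearMap.pi fun i => LinearMap.proj (idx i)
def f4 : (Fin 8 → ℂ) [⋀^Fin 4]→ₗ[ℂ] ℂ := (Matrix.detRowAlternating).compLinearMap L8
def fam : ∀ i : ℕ, (Fin 8 → ℂ) [⋀^Fin i]→ₗ[ℂ] ℂ
  | 4 => f4
  | _ => 0
def F : Λ8 →ₗ[ℂ] ℂ := liftAlternating fam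

lemma Fm1 : F (eta 0 * (etb 0 * (etb 1 * eta 1))) = 1 := by
  show liftAlternating fam (ExteriorAlgebra.ι ℂ (Pi.single ((0:Fin 4).castAdd 4) 1) *
    (ExteriorAlgebra.ι ℂ (Pi.single ((0:Fin 4).natAdd 4) 1) *
    (ExteriorAlgebra.ι ℂ (Pi.single ((1:Fin 4).natAdd 4) 1) *
      ExteriorAlgebra.ι ℂ (Pi.single ((1:Fin 4).castAdd 4) 1)))) = 1
  rw [liftAlternating_ι_mul, liftAlternating_ι_mul, liftAlternating_ι_mul, liftAlternating_ι]
  have h4 : fam ((Nat.succ 1).succ.succ) = f4 := rfl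
  rw [h4]
  simp only [AlternatingMap.curryLeft_apply_apply, f4, AlternatingMap.compLinearMap_apply]
  have hM : (⇑L8 ∘ Matrix.vecCons (Pi.single ((0:Fin 4).castAdd 4) (1:ℂ))
      (Matrix.vecCons (Pi.single ((0:Fin 4).natAdd 4) 1)
        (Matrix.vecCons (Pi.single ((1:Fin 4).natAdd 4) 1)
          ![Pi.single ((1:Fin 4).castAdd 4) 1])))
      = (1 : Matrix (Fin 4) (Fin 4) ℂ) := by
    funext i j
    fin_cases i <;> fin_cases j <;>
      norm_num [L8, idx, Pi.single_apply, Matrix.one_apply, Fin.castAdd, Fin.natAdd,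
        LinearMap.pi_apply, Fin.ext_iff] <;> decide
  rw [show (fun i => L8
        (![Pi.single ((0:Fin 4).castAdd 4) (1:ℂ), Pi.single ((0:Fin 4).natAdd 4) 1,
            Pi.single ((1:Fin 4).natAdd 4) 1, Pi.single ((1:Fin 4).castAdd 4) 1] i))
      = ⇑L8 ∘ ![Pi.single ((0:Fin 4).castAdd 4) (1:ℂ), Pi.single ((0:Fin 4).natAdd 4) 1,
            Pi.single ((1:Fin 4).natAdd 4) 1, Pi.single ((1:Fin 4).castAdd 4) 1] from rfl, hM]
  exact Matrix.det_one

lemma m1_ne : (eta 0 * (etb 0 * (etb 1 * eta 1))) ≠ 0 := by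
  intro h
  have := Fm1
  rw [h, map_zero] at this
  exact one_ne_zero (α := ℂ) this.symm

lemma m2_eq_m1 : eta 1 * (etb 1 * (etb 0 * eta 0)) = eta 0 * (etb 0 * (etb 1 * eta 1)) := by
  have swbe10 : ∀ x : Λ8, etb 1 * (eta 0 * x) = -(eta 0 * (etb 1 * x)) := fun x => gen_swap _ _ _
  have swee10 : ∀ x : Λ8, eta 1 * (eta 0 * x) = -(eta 0 * (eta 1 * x)) := fun x => gen_swap _ _ _
  have sweb10 : ∀ x : Λ8, eta 1 * (etb 0 * x) = -(etb 0 * (eta 1 * x)) := fun x => gen_swap _ _ _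
  have swbb10 : etb 1 * etb 0 = -(etb 0 * etb 1) := gen_swap2 _ _
  have swbea : etb 0 * eta 0 = -(eta 0 * etb 0) := gen_swap2 _ _
  have swbeb : eta 1 * etb 1 = -(etb 1 * eta 1) := gen_swap2 _ _
  calc eta 1 * (etb 1 * (etb 0 * eta 0))
      = eta 1 * (etb 1 * -(eta 0 * etb 0)) := by rw [swbea]
    _ = -(eta 1 * (etb 1 * (eta 0 * etb 0))) := by rw [mul_neg, mul_neg]
    _ = -(eta 1 * -(eta 0 * (etb 1 * etb 0))) := by rw [swbe10]
    _ = eta 1 * (eta 0 * (etb 1 * etb 0)) := by rw [mul_neg, neg_neg]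
    _ = eta 1 * (eta 0 * -(etb 0 * etb 1)) := by rw [swbb10]
    _ = -(eta 1 * (eta 0 * (etb 0 * etb 1))) := by rw [mul_neg, mul_neg]
    _ = -(-(eta 0 * (eta 1 * (etb 0 * etb 1)))) := by rw [swee10]
    _ = eta 0 * (eta 1 * (etb 0 * etb 1)) := neg_neg _
    _ = eta 0 * -(etb 0 * (eta 1 * etb 1)) := by rw [sweb10]
    _ = -(eta 0 * (etb 0 * (eta 1 * etb 1))) := by rw [mul_neg]
    _ = -(eta 0 * (etb 0 * -(etb 1 * eta 1))) := by rw [swbeb]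
    _ = eta 0 * (etb 0 * (etb 1 * eta 1)) := by rw [mul_neg, mul_neg, neg_neg]

theorem statement14
    -- diagonal coefficients α_{jj̄} (real, positive) and off-diagonal ones α_{jk̄} ∈ ℂ
    (α1 α2 α3 α4 : ℝ) (hα1 : 0 < α1) (hα2 : 0 < α2) (hα3 : 0 < α3) (hα4 : 0 < α4)
    (α12 α13 α14 α23 α24 α34 : ℂ)
    (del delbar : Λ8 →ₗ[ℂ] Λ8)
    (hdelL : ∀ (v : Fin 8 → ℂ) (y : Λ8),
      del (ExteriorAlgebra.ι ℂ v * y) = del (ExteriorAlgebra.ι ℂ v) * y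
        - ExteriorAlgebra.ι ℂ v * del y)
    (hdelbarL : ∀ (v : Fin 8 → ℂ) (y : Λ8),
      delbar (ExteriorAlgebra.ι ℂ v * y) = delbar (ExteriorAlgebra.ι ℂ v) * y
        - ExteriorAlgebra.ι ℂ v * delbar y)
    (hdel1 : del 1 = 0) (hdelbar1 : delbar 1 = 0)
    -- structure equations: dη^1 = dη^2 = 0, dη^3 = −(1/2)η^{11̄}, dη^4 = −(1/2)η^{22̄}
    (hdel : ∀ j : Fin 4, del (eta j) = 0)
    (hdelbarb : ∀ j : Fin 4, delbar (etb j) = 0)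
    (hdb1 : delbar (eta 0) = 0) (hdb2 : delbar (eta 1) = 0)
    (hdb3 : delbar (eta 2) = -(1 / 2 : ℂ) • (eta 0 * etb 0))
    (hdb4 : delbar (eta 3) = -(1 / 2 : ℂ) • (eta 1 * etb 1))
    (hd1 : del (etb 0) = 0) (hd2 : del (etb 1) = 0)
    (hd3 : del (etb 2) = -(1 / 2 : ℂ) • (etb 0 * eta 0))
    (hd4 : del (etb 3) = -(1 / 2 : ℂ) • (etb 1 * eta 1)) :
    del (delbar
      ((Complex.I / 2) • ((α1 : ℂ) • (eta 0 * etb 0) + (α2 : ℂ) • (eta 1 * etb 1)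
          + (α3 : ℂ) • (eta 2 * etb 2) + (α4 : ℂ) • (eta 3 * etb 3))
        + (1 / 2 : ℂ) •
          (α12 • (eta 0 * etb 1) - (starRingEnd ℂ α12) • (eta 1 * etb 0)
          + α13 • (eta 0 * etb 2) - (starRingEnd ℂ α13) • (eta 2 * etb 0)
          + α14 • (eta 0 * etb 3) - (starRingEnd ℂ α14) • (eta 3 * etb 0)
          + α23 • (eta 1 * etb 2) - (starRingEnd ℂ α23) • (eta 2 * etb 1)
          + α24 • (eta 1 * etb 3) - (starRingEnd ℂ α24) • (eta 3 * etb 1)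
          + α34 • (eta 2 * etb 3) - (starRingEnd ℂ α34) • (eta 3 * etb 2)))) = 0
      ↔ α34.im = 0 := by
  have hdbE : ∀ (j : Fin 4) (x : Λ8),
      delbar (eta j * x) = delbar (eta j) * x - eta j * delbar x := fun j x => hdelbarL _ x
  have hdE : ∀ (j : Fin 4) (x : Λ8),
      del (eta j * x) = del (eta j) * x - eta j * del x := fun j x => hdelL _ x
  have hdEb : ∀ (j : Fin 4) (x : Λ8),
      del (etb j * x) = del (etb j) * x - etb j * del x := fun j x => hdelL _ x
  have hsqb : ∀ (j : Fin 4) (x : Λ8), etb j * (etb j * x) = 0 := fun j x => gen_sq _ x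
  simp only [map_add, map_sub, map_smul, hdbE, hdelbarb, hdb1, hdb2, hdb3, hdb4,
    mul_zero, zero_mul, smul_zero, sub_zero, zero_sub, smul_mul_assoc, neg_smul,
    smul_neg, map_neg, neg_zero, add_zero, zero_add, smul_smul, mul_assoc, neg_neg,
    hdE, hdEb, hdel, hd1, hd2, hd3, hd4, mul_smul_comm, hsqb, neg_mul, mul_neg,
    sub_neg_eq_add, neg_add_rev, sub_self]
  rw [m2_eq_m1, ← neg_smul, ← add_smul, smul_smul, smul_eq_zero, or_iff_left m1_ne]
  constructor
  · intro h
    have h2 : α34 - (starRingEnd ℂ) α34 = 0 := by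
      have := h
      field_simp at this
      linear_combination this
    have h3 := Complex.sub_conj α34
    rw [h2] at h3
    have h4 : (α34.im : ℂ) = 0 := by
      field_simp at h3
      simpa using h3.symm
    exact_mod_cast h4
  · intro h
    have hc : (starRingEnd ℂ) α34 = α34 := Complex.conj_eq_iff_im.mpr h
    rw [hc]
    ring_nf
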